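/- Let a group Γ act transitively on a finite set X, and let s be a symmetric irreflexive orbit of the diagonal action of Γ on X × X, defining a simple graph G on X with adjacency relation s. Then all projected edge vectors of G have the same norm: ‖P χ_(a,b)‖ = ‖P χ_(c,d)‖ for every two pairs (a,b), (c,d) of adjacent vertices of G. -/

import Mathlib

open scoped BigOperators RealInnerProductSpace

noncomputable section

variable {V : Type*} [Fintype V] [DecidableEq V]

/-- The indicator chain `χ_(a,b)`: 1 at `(a,b)`, −1 at `(b,a)`, 0 elsewhere. -/
def edgeChi (a b : V) : EuclideanSpace ℝ (V × V) :=
  WithLp.toLp 2 (fun p => if p = (a, b) then 1 else if p = (b, a) then -1 else 0)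

/-- The cycle space `H` of a simple graph `G`: the kernel of the boundary map
restricted to the edge space `C₁`. -/
def cycleSpace (G : SimpleGraph V) : Submodule ℝ (EuclideanSpace ℝ (V × V)) where
  carrier := { f | (∀ u v : V, f (u, v) = - f (v, u)) ∧
               (∀ u v : V, ¬ G.Adj u v → f (u, v) = 0) ∧
               (∀ v : V, ∑ u : V, f (u, v) = 0) }
  add_mem' := by
    rintro f g ⟨hf1, hf2, hf3⟩ ⟨hg1, hg2, hg3⟩
    refine ⟨fun u v => ?_, fun u v h => ?_, fun v => ?_⟩
    · show f (u, v) + g (u, v) = -(f (v, u) + g (v, u))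
      rw [hf1 u v, hg1 u v]; ring
    · show f (u, v) + g (u, v) = 0
      rw [hf2 u v h, hg2 u v h]; ring
    · show ∑ u : V, (f (u, v) + g (u, v)) = 0
      rw [Finset.sum_add_distrib, hf3 v, hg3 v]; ring
  zero_mem' := by
    refine ⟨fun u v => ?_, fun u v h => ?_, fun v => ?_⟩ <;> simp
  smul_mem' := by
    rintro c f ⟨hf1, hf2, hf3⟩
    refine ⟨fun u v => ?_, fun u v h => ?_, fun v => ?_⟩
    · show c * f (u, v) = -(c * f (v, u))
      rw [hf1 u v]; ring
    · show c * f (u, v) = 0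
      rw [hf2 u v h]; ring
    · show ∑ u : V, c * f (u, v) = 0
      rw [← Finset.mul_sum, hf3 v]; ring

/-- The projected edge vector `P χ_(a,b)`, where `P` is the orthogonal projection
onto the cycle space of `G`. -/
def projEdge (G : SimpleGraph V) (a b : V) : EuclideanSpace ℝ (V × V) :=
  ((cycleSpace G).orthogonalProjectionOnto (edgeChi a b) : EuclideanSpace ℝ (V × V))

/-!
Every `g ∈ Γ` preserves the orbit `s`, so it is an automorphism of `G`. Permuting the coordinates
of `EuclideanSpace ℝ (X × X)` by a graph isomorphism is an isometry that carries cycle space onto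
cycle space and `χ_(a,b)` to `χ_(g a, g b)`; hence it commutes with the orthogonal projections and
preserves the norms of projected edge vectors. As `s` is a single orbit, some `g` maps `(a, b)`
to `(c, d)`.
-/

section

variable {V W : Type*} [Fintype V] [Fintype W]

def edgeEquiv (e : V ≃ W) :
    EuclideanSpace ℝ (V × V) ≃ₗᵢ[ℝ] EuclideanSpace ℝ (W × W) :=
  LinearIsometryEquiv.piLpCongrLeft 2 ℝ ℝ (e.prodCongr e)

theorem edgeEquiv_apply (e : V ≃ W) (f : EuclideanSpace ℝ (V × V)) (u v : W) :
    edgeEquiv e f (u, v) = f (e.symm u, e.symm v) := rfl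

theorem edgeEquiv_symm (e : V ≃ W) : (edgeEquiv e).symm = edgeEquiv e.symm := by
  rw [edgeEquiv, LinearIsometryEquiv.piLpCongrLeft_symm, Equiv.prodCongr_symm]; rfl

theorem edgeEquiv_edgeChi [DecidableEq V] [DecidableEq W] (e : V ≃ W) (a b : V) :
    edgeEquiv e (edgeChi a b) = edgeChi (e a) (e b) := by
  ext ⟨u, v⟩
  simp only [edgeEquiv_apply, edgeChi, Prod.mk.injEq, e.symm_apply_eq]

namespace SimpleGraph.Iso

variable {G : SimpleGraph V} {G' : SimpleGraph W} (φ : G ≃g G')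

theorem edgeEquiv_mem_cycleSpace {f : EuclideanSpace ℝ (V × V)} (hf : f ∈ cycleSpace G) :
    edgeEquiv φ.toEquiv f ∈ cycleSpace G' := by
  obtain ⟨hanti, hsupp, hbdry⟩ := hf
  refine ⟨fun u v => hanti _ _, fun u v huv => hsupp _ _ fun h => huv ?_, fun v => ?_⟩
  · exact φ.symm.map_adj_iff.1 h
  · exact (φ.toEquiv.symm.sum_comp (fun u => f (u, φ.toEquiv.symm v))).trans (hbdry _)

theorem map_cycleSpace :
    (cycleSpace G).map (edgeEquiv φ.toEquiv).toLinearEquiv.toLinearMap = cycleSpace G' := by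
  refine le_antisymm (Submodule.map_le_iff_le_comap.2 fun f hf => φ.edgeEquiv_mem_cycleSpace hf)
    fun f hf => ⟨(edgeEquiv φ.toEquiv).symm f, ?_, by simp⟩
  rw [edgeEquiv_symm]
  exact φ.symm.edgeEquiv_mem_cycleSpace hf

variable [DecidableEq V] [DecidableEq W]

theorem projEdge_apply (a b : V) :
    projEdge G' (φ a) (φ b) = edgeEquiv φ.toEquiv (projEdge G a b) := by
  have h := (cycleSpace G).starProjection_map_apply (edgeEquiv φ.toEquiv)
    (edgeEquiv φ.toEquiv (edgeChi a b))
  rw [LinearIsometryEquiv.symm_apply_apply, edgeEquiv_edgeChi] at h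
  simp only [φ.map_cycleSpace] at h
  exact h

theorem norm_projEdge (a b : V) : ‖projEdge G' (φ a) (φ b)‖ = ‖projEdge G a b‖ := by
  rw [φ.projEdge_apply, LinearIsometryEquiv.norm_map]

end SimpleGraph.Iso

end

theorem SimpleGraph.adj_smul_iff_of_adj_iff_mem_orbit {Γ X : Type*} [Group Γ] [MulAction Γ X]
    {G : SimpleGraph X} {p : X × X} (hG : ∀ x y : X, G.Adj x y ↔ (x, y) ∈ MulAction.orbit Γ p)
    (g : Γ) (x y : X) : G.Adj (g • x) (g • y) ↔ G.Adj x y := by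
  rw [hG, hG, ← MulAction.orbit_eq_iff, ← MulAction.orbit_eq_iff, ← Prod.smul_mk,
    MulAction.orbit_smul]

def SimpleGraph.smulIso {Γ X : Type*} [Group Γ] [MulAction Γ X] {G : SimpleGraph X}
    (hadj : ∀ (g : Γ) (x y : X), G.Adj (g • x) (g • y) ↔ G.Adj x y) (g : Γ) : G ≃g G :=
  ⟨MulAction.toPerm g, hadj g _ _⟩

theorem schurian_graph_proj_norm_eq_general
    {Γ X : Type*} [Group Γ] [MulAction Γ X] [Fintype X] [DecidableEq X]
    (s : Set (X × X)) (hs : ∃ p : X × X, s = MulAction.orbit Γ p)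
    (G : SimpleGraph X) (hG : ∀ x y : X, G.Adj x y ↔ (x, y) ∈ s) :
    ∀ a b c d : X, G.Adj a b → G.Adj c d →
      ‖projEdge G a b‖ = ‖projEdge G c d‖ := by
  obtain ⟨p, rfl⟩ := hs
  intro a b c d hab hcd
  obtain ⟨g, hg⟩ : ∃ g : Γ, g • (a, b) = (c, d) := by
    rw [hG, ← MulAction.orbit_eq_iff] at hab hcd
    rw [← MulAction.mem_orbit_iff, ← MulAction.orbit_eq_iff, hab, hcd]
  obtain ⟨rfl, rfl⟩ := Prod.ext_iff.1 hg
  exact ((SimpleGraph.smulIso (SimpleGraph.adj_smul_iff_of_adj_iff_mem_orbit hG) g).norm_projEdge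
    a b).symm

/-- **Conjecture 1.2 for Schurian schemes.** The projected edge vectors of the simple
graph defined by a symmetric irreflexive orbit of the diagonal action of a transitive
group on `X × X` all have the same norm. -/
theorem schurian_graph_proj_norm_eq
    {Γ X : Type*} [Group Γ] [MulAction Γ X] [Fintype X] [DecidableEq X]
    [MulAction.IsPretransitive Γ X]
    (s : Set (X × X)) (hs : ∃ p : X × X, s = MulAction.orbit Γ p)
    (hsymm : ∀ x y : X, (x, y) ∈ s ↔ (y, x) ∈ s)
    (hirr : ∀ x : X, (x, x) ∉ s)
    (G : SimpleGraph X) (hG : ∀ x y : X, G.Adj x y ↔ (x, y) ∈ s) :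
    ∀ a b c d : X, G.Adj a b → G.Adj c d →
      ‖projEdge G a b‖ = ‖projEdge G c d‖ :=
  schurian_graph_proj_norm_eq_general s hs G hG

end
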